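/- Let q be a prime power and k ≥ 2. The subspaces σ_a = {(s, a s) : s ∈ F_{q^k}} ⊆ F_{q^k}^2, for a ranging over the norm-1 elements of F_{q^k}, together with U = {(s, s^q) : s ∈ F_{q^k}}, satisfy: (i) each σ_a and U are k-dimensional F_q-subspaces of the 2k-dimensional F_q-space F_{q^k}^2; (ii) dim_{F_q}(σ_a ∩ U) = 1 for each norm-1 element a; (iii) σ_a ∩ σ_b = {0} for a ≠ b; (iv) the number of such σ_a equals (q^k−1)/(q−1), which is the maximum possible size of such a family. -/

import Mathlib

/-!
`U` is the graph of the Frobenius `x ↦ x ^ q` and `σ_a` the graph of `x ↦ a * x`, so `U ∩ σ_a`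
is the graph of the solution space of `s ^ q = a * s`. By Hilbert 90 for finite fields (in the
cyclic group `Kˣ` the kernel of the surjective norm `Kˣ → Fˣ` and the image of `s ↦ s ^ (q - 1)`
both have order `(q ^ k - 1) / (q - 1)`, and the latter lies in the former), this space contains
some `s₀ ≠ 0`; any other solution `s` has `s / s₀` fixed by Frobenius, hence in `F`, so the
intersection is a line. For maximality, the members of a family with pairwise trivial
intersections meet `U` in pairwise distinct points of `ℙ(U)`, of which there are
`(q ^ k - 1) / (q - 1)`.
-/

open Module
open scoped LinearAlgebra.Projectivization

namespace LinearMap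

variable {R M N : Type*} [Ring R] [AddCommGroup M] [Module R M] [AddCommGroup N] [Module R N]

theorem graph_inf_graph (f g : M →ₗ[R] N) :
    f.graph ⊓ g.graph = (eqLocus f g).map (id.prod f) := by
  ext ⟨x, y⟩
  simp only [Submodule.mem_inf, mem_graph_iff, Submodule.mem_map, mem_eqLocus, prod_apply]
  constructor
  · rintro ⟨rfl, h⟩
    exact ⟨x, h, rfl⟩
  · rintro ⟨x, h, hx⟩
    obtain ⟨rfl, rfl⟩ := Prod.ext_iff.mp hx
    exact ⟨rfl, h⟩

theorem injective_id_prod (f : M →ₗ[R] N) : Function.Injective (id.prod f) :=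
  fun _ _ h ↦ congrArg Prod.fst h

theorem finrank_graph (f : M →ₗ[R] N) : finrank R f.graph = finrank R M := by
  rw [graph_eq_range_prod, finrank_range_of_inj (injective_id_prod f)]

theorem finrank_graph_inf_graph (f g : M →ₗ[R] N) :
    finrank R ↥(f.graph ⊓ g.graph) = finrank R (eqLocus f g) := by
  rw [graph_inf_graph]
  exact (Submodule.equivMapOfInjective _ (injective_id_prod f) _).finrank_eq.symm

end LinearMap

namespace FiniteField

variable {F K : Type*} [Field F] [Field K] [Algebra F K] [Finite K]

theorem card_ker_unitsMap_norm_mul :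
    Nat.card (Units.map (Algebra.norm F : K →* F)).ker * (Nat.card F - 1) = Nat.card K - 1 := by
  rw [← Nat.card_units F, ← Nat.card_units K,
    ← (Units.map (Algebra.norm F : K →* F)).ker.card_mul_index, Subgroup.index_ker,
    MonoidHom.range_eq_top.mpr (unitsMap_norm_surjective F K), Subgroup.card_top]

theorem ker_unitsMap_norm_eq_range_powMonoidHom :
    (Units.map (Algebra.norm F : K →* F)).ker =
      (powMonoidHom (Nat.card F - 1) : Kˣ →* Kˣ).range := by
  have : Finite F := Finite.of_injective _ (algebraMap F K).injective
  have hF : 0 < Nat.card F - 1 := Nat.sub_pos_of_lt Finite.one_lt_card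
  refine (Subgroup.eq_of_le_of_card_ge ?_ ?_).symm
  · rintro _ ⟨s, rfl⟩
    rw [MonoidHom.mem_ker, powMonoidHom_apply, map_pow, ← Nat.card_units, pow_card_eq_one']
  · rw [IsCyclic.card_powMonoidHom_range, Nat.card_units, ← card_ker_unitsMap_norm_mul (F := F),
      Nat.gcd_mul_left_left, Nat.mul_div_cancel _ hF]

theorem exists_pow_card_sub_one_eq_of_norm_eq_one {a : K} (ha : Algebra.norm F a = 1) :
    ∃ s : K, s ≠ 0 ∧ s ^ (Nat.card F - 1) = a := by
  have ha₀ : a ≠ 0 := by rintro rfl; simp at ha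
  have : Units.mk0 a ha₀ ∈ (Units.map (Algebra.norm F : K →* F)).ker := by
    rw [MonoidHom.mem_ker]; ext; simpa using ha
  rw [ker_unitsMap_norm_eq_range_powMonoidHom] at this
  obtain ⟨s, hs⟩ := this
  exact ⟨s, s.ne_zero, congrArg Units.val hs⟩

theorem natCard_norm_eq_one :
    Nat.card {a : K // Algebra.norm F a = 1} = (Nat.card K - 1) / (Nat.card F - 1) := by
  have : Finite F := Finite.of_injective _ (algebraMap F K).injective
  have hF : 0 < Nat.card F - 1 := Nat.sub_pos_of_lt Finite.one_lt_card
  have e : {a : K // Algebra.norm F a = 1} ≃ (Units.map (Algebra.norm F : K →* F)).ker :=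
    { toFun := fun a ↦ ⟨Units.mk0 a (by rintro h; simpa [h] using a.2), by ext; simpa using a.2⟩
      invFun := fun u ↦ ⟨u.1, by simpa using congrArg Units.val (MonoidHom.mem_ker.mp u.2)⟩
      left_inv := fun _ ↦ rfl
      right_inv := fun _ ↦ Subtype.ext (Units.ext rfl) }
  rw [Nat.card_congr e, ← card_ker_unitsMap_norm_mul (F := F), Nat.mul_div_cancel _ hF]

variable [Fintype F]

theorem mem_range_algebraMap_of_pow_card_eq_self {x : K} (hx : x ^ Fintype.card F = x) :
    x ∈ Set.range (algebraMap F K) := by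
  rw [IsGalois.mem_range_algebraMap_iff_fixed]
  intro f
  obtain ⟨n, rfl⟩ := (bijective_frobeniusAlgEquivOfAlgebraic_pow F K).2 f
  rw [AlgEquiv.coe_pow, coe_frobeniusAlgEquivOfAlgebraic]
  exact Function.iterate_fixed hx _

theorem eqLocus_frobeniusAlgHom_mulLeft {a s : K} (hs : s ≠ 0)
    (hsa : s ^ (Fintype.card F - 1) = a) :
    LinearMap.eqLocus (frobeniusAlgHom F K).toLinearMap (LinearMap.mulLeft F a) = F ∙ s := by
  have ha : a ≠ 0 := hsa ▸ pow_ne_zero _ hs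
  have hsq : s ^ Fintype.card F = a * s := by
    rw [← hsa, ← pow_succ, Nat.sub_add_cancel Fintype.card_pos]
  refine le_antisymm (fun x hx ↦ ?_) ?_
  · replace hx : x ^ Fintype.card F = a * x := hx
    obtain ⟨c, hc⟩ := mem_range_algebraMap_of_pow_card_eq_self (F := F) (x := x / s)
      (by rw [div_pow, hx, hsq, mul_div_mul_left _ _ ha])
    exact Submodule.mem_span_singleton.mpr ⟨c, by rw [Algebra.smul_def, hc, div_mul_cancel₀ x hs]⟩
  · rw [Submodule.span_singleton_le_iff_mem, LinearMap.mem_eqLocus]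
    simpa [coe_frobeniusAlgHom] using hsq

theorem finrank_eqLocus_frobeniusAlgHom_mulLeft {a : K} (ha : Algebra.norm F a = 1) :
    finrank F (LinearMap.eqLocus (frobeniusAlgHom F K).toLinearMap (LinearMap.mulLeft F a)) =
      1 := by
  obtain ⟨s, hs, hsa⟩ := exists_pow_card_sub_one_eq_of_norm_eq_one ha
  rw [← Fintype.card_eq_nat_card] at hsa
  rw [eqLocus_frobeniusAlgHom_mulLeft hs hsa, finrank_span_singleton hs]

end FiniteField

namespace Submodule

variable {k V : Type*} [Field k] [AddCommGroup V] [Module k V]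

theorem card_le_natCard_projectivization [Finite V] (U : Submodule k V)
    (S : Finset (Submodule k V)) (hSU : ∀ W ∈ S, W ⊓ U ≠ ⊥)
    (hS : ∀ W ∈ S, ∀ W' ∈ S, W ≠ W' → W ⊓ W' = ⊥) : S.card ≤ Nat.card (ℙ k U) := by
  have hv : ∀ W : S, ∃ v : U, v ≠ 0 ∧ (v : V) ∈ W.1 := fun W ↦ by
    obtain ⟨v, hv, hv₀⟩ := (Submodule.ne_bot_iff _).mp (hSU W W.2)
    exact ⟨⟨v, (mem_inf.mp hv).2⟩, by simpa using hv₀, (mem_inf.mp hv).1⟩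
  choose v hv₀ hvW using hv
  have hinj : Function.Injective fun W : S ↦ Projectivization.mk k (v W) (hv₀ W) := by
    intro W W' h
    by_contra hne
    obtain ⟨c, hc⟩ := (Projectivization.mk_eq_mk_iff k _ _ _ _).mp h
    have hmem : (v W : V) ∈ W.1 ⊓ W'.1 :=
      mem_inf.mpr ⟨hvW W, hc ▸ W'.1.smul_mem (c : k) (hvW W')⟩
    rw [hS W W.2 W' W'.2 (fun h ↦ hne (Subtype.ext h)), mem_bot] at hmem
    exact hv₀ W (Subtype.ext hmem)
  simpa using Nat.card_le_card_of_injective _ hinj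

end Submodule

theorem inter_setOf_snd_eq_mul_fst {K : Type*} [Field K] {a b : K} (hab : a ≠ b) :
    {p : K × K | p.2 = a * p.1} ∩ {p | p.2 = b * p.1} = {0} := by
  ext ⟨x, y⟩
  simp only [Set.mem_inter_iff, Set.mem_ofPred_eq, Set.mem_singleton_iff, Prod.mk_eq_zero]
  constructor
  · rintro ⟨rfl, h⟩
    have hx : x = 0 := by
      simpa [sub_eq_zero, hab] using (show (a - b) * x = 0 by rw [sub_mul, h, sub_self])
    simp [hx]
  · rintro ⟨rfl, rfl⟩
    simp

theorem stmt19_general (F K : Type*) [Field F] [Fintype F] [Field K] [Algebra F K]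
    [FiniteDimensional F K] (k : ℕ) (hfr : finrank F K = k) :
    -- (i) the ambient space F_{q^k}² has F-dimension 2k, and U and each σ_a are
    -- k-dimensional F-subspaces
    finrank F (K × K) = 2 * k ∧
    (∃ Usub : Submodule F (K × K),
      (Usub : Set (K × K)) = {p : K × K | p.2 = p.1 ^ Fintype.card F} ∧
      finrank F Usub = k ∧
      ∀ a : K, Algebra.norm F a = 1 →
        ∃ σ : Submodule F (K × K),
          (σ : Set (K × K)) = {p : K × K | p.2 = a * p.1} ∧
          finrank F σ = k ∧
          -- (ii) dim_F(σ_a ∩ U) = 1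
          finrank F (Usub ⊓ σ : Submodule F (K × K)) = 1) ∧
    -- (iii) σ_a ∩ σ_b = {0} for a ≠ b
    (∀ a b : K, Algebra.norm F a = 1 → Algebra.norm F b = 1 → a ≠ b →
      {p : K × K | p.2 = a * p.1} ∩ {p : K × K | p.2 = b * p.1} = {0}) ∧
    -- (iv) there are (q^k - 1)/(q - 1) norm-one elements a …
    Nat.card {a : K // Algebra.norm F a = 1} =
      (Fintype.card F ^ k - 1) / (Fintype.card F - 1) ∧
    -- … and this is the maximum possible size of such a family
    (∀ (Usub : Submodule F (K × K)),
      (Usub : Set (K × K)) = {p : K × K | p.2 = p.1 ^ Fintype.card F} →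
      ∀ S : Finset (Submodule F (K × K)),
        (∀ W ∈ S, finrank F W = k ∧ W ⊓ Usub ≠ ⊥) →
        (∀ W ∈ S, ∀ W' ∈ S, W ≠ W' → W ⊓ W' = ⊥) →
        S.card ≤ (Fintype.card F ^ k - 1) / (Fintype.card F - 1)) := by
  have : Finite K := Module.finite_of_finite F
  set U := (FiniteField.frobeniusAlgHom F K).toLinearMap.graph
  have hU : (U : Set (K × K)) = {p : K × K | p.2 = p.1 ^ Fintype.card F} := rfl
  have hq : Fintype.card F ^ k = Nat.card K := by
    rw [Fintype.card_eq_nat_card, ← hfr, ← Module.natCard_eq_pow_finrank]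
  refine ⟨by rw [finrank_prod, hfr, two_mul],
    ⟨U, hU, by rw [LinearMap.finrank_graph, hfr], fun a ha ↦
      ⟨(LinearMap.mulLeft F a).graph, rfl, by rw [LinearMap.finrank_graph, hfr],
        by rw [LinearMap.finrank_graph_inf_graph,
          FiniteField.finrank_eqLocus_frobeniusAlgHom_mulLeft ha]⟩⟩,
    fun a b _ _ ↦ inter_setOf_snd_eq_mul_fst,
    by rw [hq, FiniteField.natCard_norm_eq_one, Fintype.card_eq_nat_card],
    fun U' hU' S hS hS' ↦ ?_⟩
  obtain rfl : U' = U := SetLike.coe_injective (hU'.trans hU.symm)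
  calc S.card ≤ Nat.card (ℙ F U) :=
        U.card_le_natCard_projectivization S (fun W hW ↦ (hS W hW).2) hS'
    _ = (Fintype.card F ^ k - 1) / (Fintype.card F - 1) := by
        rw [Projectivization.card'', Module.natCard_eq_pow_finrank (K := F),
          LinearMap.finrank_graph, hfr, Fintype.card_eq_nat_card]

theorem stmt19 (F K : Type*) [Field F] [Fintype F] [Field K] [Algebra F K]
    [FiniteDimensional F K] (k : ℕ) (hk : 2 ≤ k) (hfr : finrank F K = k) :
    -- (i) the ambient space F_{q^k}² has F-dimension 2k, and U and each σ_a are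
    -- k-dimensional F-subspaces
    finrank F (K × K) = 2 * k ∧
    (∃ Usub : Submodule F (K × K),
      (Usub : Set (K × K)) = {p : K × K | p.2 = p.1 ^ Fintype.card F} ∧
      finrank F Usub = k ∧
      ∀ a : K, Algebra.norm F a = 1 →
        ∃ σ : Submodule F (K × K),
          (σ : Set (K × K)) = {p : K × K | p.2 = a * p.1} ∧
          finrank F σ = k ∧
          -- (ii) dim_F(σ_a ∩ U) = 1
          finrank F (Usub ⊓ σ : Submodule F (K × K)) = 1) ∧
    -- (iii) σ_a ∩ σ_b = {0} for a ≠ b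
    (∀ a b : K, Algebra.norm F a = 1 → Algebra.norm F b = 1 → a ≠ b →
      {p : K × K | p.2 = a * p.1} ∩ {p : K × K | p.2 = b * p.1} = {0}) ∧
    -- (iv) there are (q^k - 1)/(q - 1) norm-one elements a …
    Nat.card {a : K // Algebra.norm F a = 1} =
      (Fintype.card F ^ k - 1) / (Fintype.card F - 1) ∧
    -- … and this is the maximum possible size of such a family
    (∀ (Usub : Submodule F (K × K)),
      (Usub : Set (K × K)) = {p : K × K | p.2 = p.1 ^ Fintype.card F} →
      ∀ S : Finset (Submodule F (K × K)),
        (∀ W ∈ S, finrank F W = k ∧ W ⊓ Usub ≠ ⊥) →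
        (∀ W ∈ S, ∀ W' ∈ S, W ≠ W' → W ⊓ W' = ⊥) →
        S.card ≤ (Fintype.card F ^ k - 1) / (Fintype.card F - 1)) :=
  stmt19_general F K k hfr
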